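/- arXiv:1607.05346 — 4 statements merged into one kernel-verified Lean document; each statement's English description precedes it below -/
import Mathlib

section
/- Let K be a field and A a commutative K-algebra equipped with an ℕ-grading 𝒜 : ℕ → Submodule K A making A a graded K-algebra. Let n ≥ 1, let r, s be positive integers with r not dividing s, and let a ∈ 𝒜 r and b ∈ 𝒜 s be homogeneous elements. Then in A ⊗[K] A, applying the linear map π_{nr} ⊗ π_s (the tensor product of the graded projections onto the components of degree nr and s) to the element (a ⊗ 1 − 1 ⊗ a)^n · (b ⊗ 1 − 1 ⊗ b) yields exactly −(a^n ⊗ b); that is, the bidegree (nr, s) component of this product is −a^n ⊗ b. -/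
open scoped TensorProduct

lemma proj_same {K A : Type*} [Field K] [CommRing A] [Algebra K A]
    (𝒜 : ℕ → Submodule K A) [GradedAlgebra 𝒜] {i : ℕ} {x : A} (hx : x ∈ 𝒜 i) :
    GradedAlgebra.proj 𝒜 i x = x := by
  rw [GradedAlgebra.proj_apply, DirectSum.decompose_of_mem_same 𝒜 hx]

lemma proj_ne' {K A : Type*} [Field K] [CommRing A] [Algebra K A]
    (𝒜 : ℕ → Submodule K A) [GradedAlgebra 𝒜] {i j : ℕ} {x : A} (hx : x ∈ 𝒜 i)
    (hij : i ≠ j) : GradedAlgebra.proj 𝒜 j x = 0 := by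
  rw [GradedAlgebra.proj_apply, DirectSum.decompose_of_mem_ne 𝒜 hx hij]

/-- For a graded commutative `K`-algebra `A`, `n ≥ 1`, `r, s > 0` with `r ∤ s`,
`a ∈ 𝒜 r` and `b ∈ 𝒜 s`, the bidegree `(nr, s)` component of
`(a ⊗ 1 − 1 ⊗ a)^n · (b ⊗ 1 − 1 ⊗ b)` in `A ⊗[K] A` is `−(a^n ⊗ b)`. -/
theorem stmt_2 (K A : Type*) [Field K] [CommRing A] [Algebra K A]
    (𝒜 : ℕ → Submodule K A) [GradedAlgebra 𝒜]
    (n r s : ℕ) (hn : 1 ≤ n) (hr : 0 < r) (hs : 0 < s) (hrs : ¬ r ∣ s)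
    (a b : A) (ha : a ∈ 𝒜 r) (hb : b ∈ 𝒜 s) :
    TensorProduct.map (GradedAlgebra.proj 𝒜 (n * r)) (GradedAlgebra.proj 𝒜 s)
        ((((a ⊗ₜ[K] (1 : A)) - ((1 : A) ⊗ₜ[K] a)) ^ n)
          * ((b ⊗ₜ[K] (1 : A)) - ((1 : A) ⊗ₜ[K] b)))
      = - ((a ^ n) ⊗ₜ[K] b) := by
  classical
  have hpow : ∀ m : ℕ, a ^ m ∈ 𝒜 (m * r) := fun m => SetLike.pow_mem_graded m ha
  have expand : (((a ⊗ₜ[K] (1:A)) - ((1:A) ⊗ₜ[K] a)) ^ n)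
        * ((b ⊗ₜ[K] (1:A)) - ((1:A) ⊗ₜ[K] b))
      = ∑ m ∈ Finset.range (n+1), ((-1)^(m+n) * (n.choose m : ℤ)) •
          ( ((a^m * b) ⊗ₜ[K] (a^(n-m))) - ((a^m) ⊗ₜ[K] (a^(n-m) * b)) ) := by
    rw [sub_pow, Finset.sum_mul]
    refine Finset.sum_congr rfl fun m _ => ?_
    have hx : (a ⊗ₜ[K] (1:A))^m = (a^m) ⊗ₜ[K] (1:A) := by
      rw [Algebra.TensorProduct.tmul_pow, one_pow]
    have hy : ((1:A) ⊗ₜ[K] a)^(n-m) = (1:A) ⊗ₜ[K] (a^(n-m)) := by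
      rw [Algebra.TensorProduct.tmul_pow, one_pow]
    have e1 : ((a^m) ⊗ₜ[K] (1:A)) * ((1:A) ⊗ₜ[K] (a^(n-m))) * (b ⊗ₜ[K] (1:A))
        = (a^m * b) ⊗ₜ[K] (a^(n-m)) := by
      rw [Algebra.TensorProduct.tmul_mul_tmul, Algebra.TensorProduct.tmul_mul_tmul,
        one_mul, mul_one, mul_one]
    have e2 : ((a^m) ⊗ₜ[K] (1:A)) * ((1:A) ⊗ₜ[K] (a^(n-m))) * ((1:A) ⊗ₜ[K] b)
        = (a^m) ⊗ₜ[K] (a^(n-m) * b) := by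
      rw [Algebra.TensorProduct.tmul_mul_tmul, Algebra.TensorProduct.tmul_mul_tmul,
        one_mul, mul_one, mul_one]
    rw [hx, hy, zsmul_eq_mul]
    push_cast
    rw [← e1, ← e2]
    ring
  rw [expand, map_sum, Finset.sum_eq_single n]
  · have h1 : GradedAlgebra.proj 𝒜 (n*r) (a^n * b) = 0 := by
      refine proj_ne' 𝒜 (SetLike.mul_mem_graded (hpow n) hb) ?_
      omega
    have h2 : GradedAlgebra.proj 𝒜 (n*r) (a^n) = a^n := proj_same 𝒜 (hpow n)
    have h3 : GradedAlgebra.proj 𝒜 s (a^(n-n) * b) = b := by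
      rw [Nat.sub_self, pow_zero, one_mul]; exact proj_same 𝒜 hb
    rw [map_zsmul, map_sub, TensorProduct.map_tmul, TensorProduct.map_tmul, h1, h2, h3,
      TensorProduct.zero_tmul, zero_sub]
    have hsign : ((-1:ℤ)^(n+n) * (n.choose n : ℤ)) = 1 := by
      rw [← two_mul, pow_mul]; simp
    rw [hsign, one_smul]
  · intro m hm hmn
    rw [Finset.mem_range, Nat.lt_succ_iff] at hm
    have h1 : GradedAlgebra.proj 𝒜 (n*r) (a^m * b) = 0 := by
      refine proj_ne' 𝒜 (SetLike.mul_mem_graded (hpow m) hb) fun h => ?_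
      exact hrs ⟨n - m, by rw [mul_comm, Nat.sub_mul]; omega⟩
    have h2 : GradedAlgebra.proj 𝒜 (n*r) (a^m) = 0 := by
      refine proj_ne' 𝒜 (hpow m) fun h => hmn ?_
      exact Nat.eq_of_mul_eq_mul_right hr h
    rw [map_zsmul, map_sub, TensorProduct.map_tmul, TensorProduct.map_tmul, h1, h2,
      TensorProduct.zero_tmul, TensorProduct.zero_tmul, sub_zero, smul_zero]
  · intro h
    exact absurd (Finset.self_mem_range_succ n) h
end

section
/- Let K be a field and A a commutative K-algebra equipped with an ℕ-grading 𝒜 : ℕ → Submodule K A making A a graded K-algebra. Let n ≥ 1, let r, s be positive integers with r not dividing s, and let a ∈ 𝒜 r and b ∈ 𝒜 s be homogeneous elements with a^n ≠ 0 and b ≠ 0. Then in A ⊗[K] A the product of zero-divisors (a ⊗ 1 − 1 ⊗ a)^n · (b ⊗ 1 − 1 ⊗ b) is nonzero. (This is the algebraic core of Theorem 5(1): combined with nil ker U₂(X) ≤ TC(X) it shows that no such extra class b can exist when TC(X) = n.) -/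
open scoped TensorProduct

open DirectSum Finset

/-- For a graded commutative `K`-algebra `A` over a field `K`, `n ≥ 1`, `r, s > 0`
with `r ∤ s`, `a ∈ 𝒜 r` with `a^n ≠ 0` and `b ∈ 𝒜 s` with `b ≠ 0`, the product of
zero-divisors `(a ⊗ 1 − 1 ⊗ a)^n · (b ⊗ 1 − 1 ⊗ b)` is nonzero in `A ⊗[K] A`. -/
theorem stmt_3 (K A : Type*) [Field K] [CommRing A] [Algebra K A]
    (𝒜 : ℕ → Submodule K A) [GradedAlgebra 𝒜]
    (n r s : ℕ) (hn : 1 ≤ n) (hr : 0 < r) (hs : 0 < s) (hrs : ¬ r ∣ s)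
    (a b : A) (ha : a ∈ 𝒜 r) (hb : b ∈ 𝒜 s) (han : a ^ n ≠ 0) (hb0 : b ≠ 0) :
    (((a ⊗ₜ[K] (1 : A)) - ((1 : A) ⊗ₜ[K] a)) ^ n)
        * ((b ⊗ₜ[K] (1 : A)) - ((1 : A) ⊗ₜ[K] b)) ≠ 0 := by
  classical
  set π : ℕ → A →ₗ[K] A := fun d => GradedAlgebra.proj 𝒜 d with hπ
  have hπ_same : ∀ (d : ℕ) (x : A), x ∈ 𝒜 d → π d x = x := by
    intro d x hx
    simp [hπ, GradedAlgebra.proj_apply, DirectSum.decompose_of_mem_same 𝒜 hx]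
  have hπ_ne : ∀ (d e : ℕ) (x : A), x ∈ 𝒜 e → e ≠ d → π d x = 0 := by
    intro d e x hx hne
    simp [hπ, GradedAlgebra.proj_apply, DirectSum.decompose_of_mem_ne 𝒜 hx hne]
  set φ : A ⊗[K] A →ₗ[K] A ⊗[K] A := TensorProduct.map (π (n * r)) (π s) with hφ
  -- membership facts
  have hapow : ∀ m : ℕ, a ^ m ∈ 𝒜 (m * r) := by
    intro m
    simpa [smul_eq_mul] using SetLike.pow_mem_graded m ha
  -- compute φ of the expression
  have key : φ ((((a ⊗ₜ[K] (1 : A)) - ((1 : A) ⊗ₜ[K] a)) ^ n)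
      * ((b ⊗ₜ[K] (1 : A)) - ((1 : A) ⊗ₜ[K] b))) = -((a ^ n) ⊗ₜ[K] b) := by
    rw [sub_pow, Finset.sum_mul, map_sum]
    have hterm : ∀ m ∈ Finset.range (n + 1),
        φ ((-1 : A ⊗[K] A) ^ (m + n) * (a ⊗ₜ[K] (1 : A)) ^ m
            * ((1 : A) ⊗ₜ[K] a) ^ (n - m) * (n.choose m : A ⊗[K] A)
            * ((b ⊗ₜ[K] (1 : A)) - ((1 : A) ⊗ₜ[K] b)))
          = if m = n then -((a ^ n) ⊗ₜ[K] b) else 0 := by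
      intro m hm
      rw [Finset.mem_range] at hm
      have hmn : m ≤ n := Nat.lt_succ_iff.mp hm
      have t1 : (a ⊗ₜ[K] (1 : A)) ^ m * ((1 : A) ⊗ₜ[K] a) ^ (n - m)
          * (b ⊗ₜ[K] (1 : A)) = (a ^ m * b) ⊗ₜ[K] (a ^ (n - m)) := by
        simp [Algebra.TensorProduct.tmul_pow, Algebra.TensorProduct.tmul_mul_tmul,
          mul_comm]
      have t2 : (a ⊗ₜ[K] (1 : A)) ^ m * ((1 : A) ⊗ₜ[K] a) ^ (n - m)
          * ((1 : A) ⊗ₜ[K] b) = (a ^ m) ⊗ₜ[K] (a ^ (n - m) * b) := by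
        simp [Algebra.TensorProduct.tmul_pow, Algebra.TensorProduct.tmul_mul_tmul]
      have hexp : (-1 : A ⊗[K] A) ^ (m + n) * (a ⊗ₜ[K] (1 : A)) ^ m
            * ((1 : A) ⊗ₜ[K] a) ^ (n - m) * (n.choose m : A ⊗[K] A)
            * ((b ⊗ₜ[K] (1 : A)) - ((1 : A) ⊗ₜ[K] b))
          = ((-1 : ℤ) ^ (m + n) * (n.choose m : ℤ)) •
            (((a ^ m * b) ⊗ₜ[K] (a ^ (n - m))) - ((a ^ m) ⊗ₜ[K] (a ^ (n - m) * b))) := by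
        rw [zsmul_eq_mul]
        push_cast
        rw [← t1, ← t2]
        ring
      rw [hexp, map_zsmul, map_sub, TensorProduct.map_tmul, TensorProduct.map_tmul]
      -- first tensor always dies: a^m * b ∈ 𝒜 (m*r + s), and m*r + s ≠ n*r
      have h1 : π (n * r) (a ^ m * b) = 0 := by
        refine hπ_ne _ (m * r + s) _ (SetLike.mul_mem_graded (hapow m) hb) ?_
        intro hEq
        have hsub : (n - m) * r = n * r - m * r := Nat.sub_mul n m r
        have hmr : m * r ≤ n * r := Nat.mul_le_mul_right r hmn
        have : s = (n - m) * r := by omega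
        exact hrs ⟨n - m, by rw [this]; ring⟩
      rw [h1, TensorProduct.zero_tmul, zero_sub]
      by_cases hcase : m = n
      · subst hcase
        rw [hπ_same _ _ (hapow m), Nat.sub_self, pow_zero, one_mul, hπ_same _ _ hb]
        have hev : Even (m + m) := ⟨m, rfl⟩
        simp [Nat.choose_self, hev.neg_one_pow]
      · rw [hπ_ne (n * r) (m * r) _ (hapow m) ?_]
        · simp [hcase]
        · intro hEq
          exact hcase (Nat.eq_of_mul_eq_mul_right hr hEq)
    rw [Finset.sum_congr rfl hterm]
    simp
  -- a ^ n ⊗ b ≠ 0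
  have htens : ((a ^ n) ⊗ₜ[K] b : A ⊗[K] A) ≠ 0 := by
    have : ¬ ∀ f : Module.Dual K A, f b = 0 := by
      rw [Module.forall_dual_apply_eq_zero_iff]
      exact hb0
    push_neg at this
    obtain ⟨f, hf⟩ := this
    intro h0
    have := congrArg (fun x => (TensorProduct.rid K A) ((LinearMap.lTensor A f) x)) h0
    simp only [LinearMap.lTensor_tmul, TensorProduct.rid_tmul, map_zero] at this
    exact (smul_ne_zero hf han) this
  intro h0
  rw [h0, map_zero] at key
  exact htens (by rw [← neg_neg ((a ^ n) ⊗ₜ[K] b), ← key]; simp)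
end

section
/- Let K be a field and A a commutative K-algebra equipped with an ℕ-grading 𝒜 : ℕ → Submodule K A making A a graded K-algebra. Let r_1, …, r_n be positive integers and a_i ∈ 𝒜 r_i homogeneous elements (1 ≤ i ≤ n), and let b ∈ 𝒜 s be homogeneous with s > 0 such that s ≠ ∑_{i∈T} r_i for every nonempty subset T of {1,…,n}. Then in A ⊗[K] A, applying the linear map π_{r_1+⋯+r_n} ⊗ π_s (the tensor product of the graded projections onto the components of degree r_1+⋯+r_n and s) to the element ∏_{i=1}^{n}(a_i ⊗ 1 − 1 ⊗ a_i) · (b ⊗ 1 − 1 ⊗ b) yields exactly −((a_1 a_2 ⋯ a_n) ⊗ b); that is, the bidegree (r_1+⋯+r_n, s) component of this product is −(a_1⋯a_n) ⊗ b. -/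
open scoped TensorProduct

/-- For a graded commutative `K`-algebra `A` over a field `K`, homogeneous elements
`a i ∈ 𝒜 (r i)` with all `r i > 0`, and `b ∈ 𝒜 s` with `s > 0` such that `s` is not the
sum of the `r i` over any nonempty subset `T` of the index set, the bidegree
`(r_1+⋯+r_n, s)` component of `∏ (a_i ⊗ 1 − 1 ⊗ a_i) · (b ⊗ 1 − 1 ⊗ b)` is
`−((a_1⋯a_n) ⊗ b)`. -/
theorem stmt_4 (K A : Type*) [Field K] [CommRing A] [Algebra K A]
    (𝒜 : ℕ → Submodule K A) [GradedAlgebra 𝒜]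
    (n : ℕ) (r : Fin n → ℕ) (hr : ∀ i, 0 < r i)
    (a : Fin n → A) (ha : ∀ i, a i ∈ 𝒜 (r i))
    (s : ℕ) (hs : 0 < s) (b : A) (hb : b ∈ 𝒜 s)
    (hsum : ∀ T : Finset (Fin n), T.Nonempty → s ≠ ∑ i ∈ T, r i) :
    TensorProduct.map (GradedAlgebra.proj 𝒜 (∑ i, r i)) (GradedAlgebra.proj 𝒜 s)
        ((∏ i : Fin n, ((a i ⊗ₜ[K] (1 : A)) - ((1 : A) ⊗ₜ[K] a i)))
          * ((b ⊗ₜ[K] (1 : A)) - ((1 : A) ⊗ₜ[K] b)))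
      = - ((∏ i : Fin n, a i) ⊗ₜ[K] b) := by
  classical
  set π := TensorProduct.map (GradedAlgebra.proj 𝒜 (∑ i, r i)) (GradedAlgebra.proj 𝒜 s) with hπ
  -- left tensor product of a finset product
  have h1 : ∀ (T : Finset (Fin n)),
      (∏ i ∈ T, ((a i) ⊗ₜ[K] (1 : A))) = (∏ i ∈ T, a i) ⊗ₜ[K] (1 : A) := by
    intro T
    induction T using Finset.induction with
    | empty => simp [Algebra.TensorProduct.one_def]
    | insert _ _ h ih =>
        rw [Finset.prod_insert h, Finset.prod_insert h, ih,
          Algebra.TensorProduct.tmul_mul_tmul, mul_one]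
  have h2 : ∀ (T : Finset (Fin n)),
      (∏ i ∈ T, ((1 : A) ⊗ₜ[K] (a i))) = (1 : A) ⊗ₜ[K] (∏ i ∈ T, a i) := by
    intro T
    induction T using Finset.induction with
    | empty => simp [Algebra.TensorProduct.one_def]
    | insert _ _ h ih =>
        rw [Finset.prod_insert h, Finset.prod_insert h, ih,
          Algebra.TensorProduct.tmul_mul_tmul, mul_one]
  -- expansion of the product
  have expand : (∏ i : Fin n, ((a i ⊗ₜ[K] (1 : A)) - ((1 : A) ⊗ₜ[K] a i)))
      = ∑ T ∈ (Finset.univ : Finset (Fin n)).powerset,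
          ((-1 : A ⊗[K] A) ^ (Finset.univ \ T).card) *
            ((∏ i ∈ T, a i) ⊗ₜ[K] (∏ i ∈ Finset.univ \ T, a i)) := by
    simp_rw [sub_eq_add_neg, Finset.prod_add]
    refine Finset.sum_congr rfl fun T hT => ?_
    rw [h1]
    have : (∏ i ∈ Finset.univ \ T, -((1 : A) ⊗ₜ[K] (a i)))
        = (-1 : A ⊗[K] A) ^ (Finset.univ \ T).card *
            ((1 : A) ⊗ₜ[K] (∏ i ∈ Finset.univ \ T, a i)) := by
      simp_rw [neg_eq_neg_one_mul ((1 : A) ⊗ₜ[K] _)]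
      rw [Finset.prod_mul_distrib, Finset.prod_const, h2]
    rw [this, mul_left_comm, Algebra.TensorProduct.tmul_mul_tmul, mul_one, one_mul]
  -- sign absorption
  have hu : ∀ (k : ℕ) (z : A ⊗[K] A), π z = 0 → π ((-1 : A ⊗[K] A) ^ k * z) = 0 := by
    intro k z hz
    rcases Nat.even_or_odd k with h | h
    · rw [h.neg_one_pow, one_mul, hz]
    · rw [h.neg_one_pow, neg_one_mul, map_neg, hz, neg_zero]
  have key : ∀ T ∈ (Finset.univ : Finset (Fin n)).powerset,
      π (((-1 : A ⊗[K] A) ^ (Finset.univ \ T).card *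
          ((∏ i ∈ T, a i) ⊗ₜ[K] (∏ i ∈ Finset.univ \ T, a i)))
          * ((b ⊗ₜ[K] (1 : A)) - ((1 : A) ⊗ₜ[K] b)))
      = if T = Finset.univ then -((∏ i : Fin n, a i) ⊗ₜ[K] b) else 0 := by
    intro T _
    have hP : (∏ i ∈ T, a i) ∈ 𝒜 (∑ i ∈ T, r i) :=
      SetLike.prod_mem_graded 𝒜 r a (fun k _ => ha k)
    have hQ : (∏ i ∈ Finset.univ \ T, a i) ∈ 𝒜 (∑ i ∈ Finset.univ \ T, r i) :=
      SetLike.prod_mem_graded 𝒜 r a (fun k _ => ha k)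
    by_cases hT : T = Finset.univ
    · subst hT
      simp only [if_pos rfl, Finset.sdiff_self, Finset.card_empty, pow_zero, one_mul,
        Finset.prod_empty]
      rw [mul_sub, Algebra.TensorProduct.tmul_mul_tmul,
        Algebra.TensorProduct.tmul_mul_tmul]
      simp only [mul_one, one_mul]
      rw [map_sub, hπ, TensorProduct.map_tmul, TensorProduct.map_tmul]
      have e1 : GradedAlgebra.proj 𝒜 s (1 : A) = 0 := by
        rw [GradedAlgebra.proj_apply,
          DirectSum.decompose_of_mem_ne 𝒜 (SetLike.GradedOne.one_mem (A := 𝒜)) hs.ne]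
      have e2 : GradedAlgebra.proj 𝒜 (∑ i, r i) (∏ i, a i) = ∏ i, a i := by
        rw [GradedAlgebra.proj_apply,
          DirectSum.decompose_of_mem_same 𝒜 (SetLike.prod_mem_graded 𝒜 r a (fun k _ => ha k))]
      have e3 : GradedAlgebra.proj 𝒜 s b = b := by
        rw [GradedAlgebra.proj_apply, DirectSum.decompose_of_mem_same 𝒜 hb]
      rw [e1, e2, e3, TensorProduct.tmul_zero, zero_sub]
      simp
    · rw [if_neg hT, mul_assoc]
      apply hu
      -- the projection of the pure-tensor part vanishes
      have hTne : (Finset.univ \ T).Nonempty := by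
        rw [Finset.sdiff_nonempty]
        exact fun h => hT (Finset.univ_subset_iff.mp h)
      have eQ : GradedAlgebra.proj 𝒜 s (∏ i ∈ Finset.univ \ T, a i) = 0 := by
        rw [GradedAlgebra.proj_apply,
          DirectSum.decompose_of_mem_ne 𝒜 hQ (fun h => hsum _ hTne (h ▸ rfl))]
      have hlt : (∑ i ∈ T, r i) < ∑ i, r i := by
        obtain ⟨j, hj⟩ := hTne
        have hjT : j ∉ T := (Finset.mem_sdiff.mp hj).2
        exact Finset.sum_lt_sum_of_subset (Finset.subset_univ T) (Finset.mem_univ j) hjT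
          (hr j) (fun k _ _ => Nat.zero_le _)
      have eP : GradedAlgebra.proj 𝒜 (∑ i, r i) (∏ i ∈ T, a i) = 0 := by
        rw [GradedAlgebra.proj_apply, DirectSum.decompose_of_mem_ne 𝒜 hP hlt.ne]
      rw [mul_sub, Algebra.TensorProduct.tmul_mul_tmul,
        Algebra.TensorProduct.tmul_mul_tmul]
      simp only [mul_one]
      rw [map_sub, hπ, TensorProduct.map_tmul, TensorProduct.map_tmul, eQ, eP,
        TensorProduct.tmul_zero, TensorProduct.zero_tmul, sub_zero]
  rw [expand, Finset.sum_mul, map_sum, Finset.sum_congr rfl key]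
  simp
end

section
/- Let K be a field and A a commutative K-algebra equipped with an ℕ-grading 𝒜 : ℕ → Submodule K A making A a graded K-algebra. Let r_1, …, r_n be positive integers and a_i ∈ 𝒜 r_i homogeneous elements (1 ≤ i ≤ n) with a_1 a_2 ⋯ a_n ≠ 0, and let b ∈ 𝒜 s be homogeneous with s > 0, b ≠ 0, such that s ≠ ∑_{i∈T} r_i for every nonempty subset T of {1,…,n}. Then in A ⊗[K] A the product of zero-divisors ∏_{i=1}^{n}(a_i ⊗ 1 − 1 ⊗ a_i) · (b ⊗ 1 − 1 ⊗ b) is nonzero. (This is the algebraic core of Theorem 5(2), and it also covers the case |a_1| = ⋯ = |a_n| = r of Remark 6(1) since the degrees r_i need not be distinct.) -/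
open scoped TensorProduct

/-- For a graded commutative `K`-algebra `A` over a field `K`, homogeneous elements
`a i ∈ 𝒜 (r i)` with all `r i > 0` and `a_1 ⋯ a_n ≠ 0`, and `b ∈ 𝒜 s` with `s > 0`,
`b ≠ 0`, such that `s` is not the sum of the `r i` over any nonempty subset of the
index set, the product `∏ (a_i ⊗ 1 − 1 ⊗ a_i) · (b ⊗ 1 − 1 ⊗ b)` is nonzero in
`A ⊗[K] A`. -/
theorem stmt_5 (K A : Type*) [Field K] [CommRing A] [Algebra K A]
    (𝒜 : ℕ → Submodule K A) [GradedAlgebra 𝒜]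
    (n : ℕ) (r : Fin n → ℕ) (hr : ∀ i, 0 < r i)
    (a : Fin n → A) (ha : ∀ i, a i ∈ 𝒜 (r i)) (hprod : (∏ i : Fin n, a i) ≠ 0)
    (s : ℕ) (hs : 0 < s) (b : A) (hb : b ∈ 𝒜 s) (hb0 : b ≠ 0)
    (hsum : ∀ T : Finset (Fin n), T.Nonempty → s ≠ ∑ i ∈ T, r i) :
    (∏ i : Fin n, ((a i ⊗ₜ[K] (1 : A)) - ((1 : A) ⊗ₜ[K] a i)))
        * ((b ⊗ₜ[K] (1 : A)) - ((1 : A) ⊗ₜ[K] b)) ≠ 0 := by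
  classical
  -- dual functional picking out b
  obtain ⟨φ, hφ⟩ : ∃ φ : Module.Dual K A, φ b ≠ 0 := by
    by_contra h
    push_neg at h
    exact hb0 ((Module.forall_dual_apply_eq_zero_iff K b).mp h)
  -- projection onto degree s, as a K-linear map
  let π : A →ₗ[K] A := (𝒜 s).subtype ∘ₗ
    (DirectSum.component K ℕ (fun i => 𝒜 i) s) ∘ₗ
    (DirectSum.decomposeLinearEquiv 𝒜).toLinearMap
  have hπ_same : ∀ x ∈ 𝒜 s, π x = x := fun x hx => by
    simpa [π, DirectSum.decomposeLinearEquiv_apply, ← DirectSum.apply_eq_component] using DirectSum.decompose_of_mem_same 𝒜 hx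
  have hπ_ne : ∀ {d : ℕ} (x : A), x ∈ 𝒜 d → d ≠ s → π x = 0 := fun {d} x hx hd => by
    simpa [π, DirectSum.decomposeLinearEquiv_apply, ← DirectSum.apply_eq_component] using DirectSum.decompose_of_mem_ne 𝒜 hx hd
  let ψ : A →ₗ[K] K := φ ∘ₗ π
  let F : A ⊗[K] A →ₗ[K] A :=
    (TensorProduct.rid K A).toLinearMap ∘ₗ LinearMap.lTensor A ψ
  have hF : ∀ (u v : A), F (u ⊗ₜ[K] v) = ψ v • u := fun u v => by
    simp [F, TensorProduct.rid_tmul]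
  -- expand the product
  have hexp : (∏ i : Fin n, ((a i ⊗ₜ[K] (1 : A)) - ((1 : A) ⊗ₜ[K] a i)))
      = ∑ T ∈ (Finset.univ : Finset (Fin n)).powerset,
          ((-1 : ℤ) ^ T.card) •
            ((∏ i ∈ Finset.univ \ T, a i) ⊗ₜ[K] (∏ i ∈ T, a i)) := by
    have h1 : ∀ i : Fin n, (a i ⊗ₜ[K] (1 : A)) - ((1 : A) ⊗ₜ[K] a i)
        = (-((1 : A) ⊗ₜ[K] a i)) + (a i ⊗ₜ[K] (1 : A)) := fun i => by ring
    rw [Finset.prod_congr rfl fun i _ => h1 i, Finset.prod_add]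
    refine Finset.sum_congr rfl fun T _ => ?_
    have h2 : (∏ i ∈ T, -((1 : A) ⊗ₜ[K] a i))
        = ((-1 : ℤ) ^ T.card) • ((1 : A) ⊗ₜ[K] (∏ i ∈ T, a i)) := by
      rw [show (∏ i ∈ T, -((1 : A) ⊗ₜ[K] a i))
          = ∏ i ∈ T, ((-1 : A ⊗[K] A) * ((1 : A) ⊗ₜ[K] a i)) by
        refine Finset.prod_congr rfl fun i _ => ?_; ring]
      rw [Finset.prod_mul_distrib, Finset.prod_const]
      rw [show (∏ i ∈ T, ((1 : A) ⊗ₜ[K] a i))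
          = ((1 : A) ⊗ₜ[K] (∏ i ∈ T, a i)) from
        (map_prod (Algebra.TensorProduct.includeRight (R := K) (A := A) (B := A)) a T).symm]
      rw [zsmul_eq_mul]
      push_cast
      ring
    have h3 : (∏ i ∈ Finset.univ \ T, (a i ⊗ₜ[K] (1 : A)))
        = ((∏ i ∈ Finset.univ \ T, a i) ⊗ₜ[K] (1 : A)) :=
      (map_prod (Algebra.TensorProduct.includeLeft (R := K) (S := K) (A := A) (B := A)) a (Finset.univ \ T)).symm
    rw [h2, h3, smul_mul_assoc, Algebra.TensorProduct.tmul_mul_tmul, one_mul, mul_one]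
  intro hzero
  apply hφ
  have hFzero : F ((∏ i : Fin n, ((a i ⊗ₜ[K] (1 : A)) - ((1 : A) ⊗ₜ[K] a i)))
      * ((b ⊗ₜ[K] (1 : A)) - ((1 : A) ⊗ₜ[K] b))) = 0 := by rw [hzero]; simp
  rw [hexp, Finset.sum_mul, map_sum] at hFzero
  -- compute each summand
  have hterm : ∀ T ∈ (Finset.univ : Finset (Fin n)).powerset,
      F ((((-1 : ℤ) ^ T.card) •
          ((∏ i ∈ Finset.univ \ T, a i) ⊗ₜ[K] (∏ i ∈ T, a i)))
        * ((b ⊗ₜ[K] (1 : A)) - ((1 : A) ⊗ₜ[K] b)))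
      = if T = ∅ then -(φ b • ∏ i : Fin n, a i) else 0 := by
    intro T _
    have hQ : (∏ i ∈ T, a i) ∈ 𝒜 (∑ i ∈ T, r i) :=
      SetLike.prod_mem_graded 𝒜 r a (fun i _ => ha i)
    rw [smul_mul_assoc, map_zsmul, mul_sub, Algebra.TensorProduct.tmul_mul_tmul,
      Algebra.TensorProduct.tmul_mul_tmul, map_sub, hF, hF]
    rcases eq_or_ne T ∅ with hT | hT
    · subst hT
      have hψ1 : ψ (1 : A) = 0 := by
        simp only [ψ, LinearMap.comp_apply]
        rw [hπ_ne (1 : A) SetLike.GradedOne.one_mem hs.ne]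
        simp
      have hψb : ψ b = φ b := by
        simp only [ψ, LinearMap.comp_apply, hπ_same b hb]
      simp only [Finset.prod_empty, Finset.card_empty, pow_zero, one_smul,
        Finset.sdiff_empty, mul_one, one_mul, hψ1, hψb, zero_smul, zero_sub, if_true]
    · have hTne : T.Nonempty := Finset.nonempty_of_ne_empty hT
      have hpos : 0 < ∑ i ∈ T, r i := Finset.sum_pos (fun i _ => hr i) hTne
      have hψQ : ψ ((∏ i ∈ T, a i) * 1) = 0 := by
        rw [mul_one]
        simp only [ψ, LinearMap.comp_apply]
        rw [hπ_ne _ hQ (fun h => hsum T hTne h.symm)]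
        simp
      have hψQb : ψ ((∏ i ∈ T, a i) * b) = 0 := by
        have hmem : (∏ i ∈ T, a i) * b ∈ 𝒜 (∑ i ∈ T, r i + s) :=
          SetLike.mul_mem_graded hQ hb
        simp only [ψ, LinearMap.comp_apply]
        rw [hπ_ne _ hmem (by omega)]
        simp
      rw [hψQ, hψQb, zero_smul, zero_smul, sub_zero, smul_zero, if_neg hT]
  rw [Finset.sum_congr rfl hterm, Finset.sum_ite_eq' _ (∅ : Finset (Fin n))] at hFzero
  simp only [Finset.mem_powerset, Finset.empty_subset, if_true, neg_eq_zero] at hFzero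
  rcases smul_eq_zero.mp hFzero with h | h
  · exact h
  · exact absurd h hprod
end
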